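/- Let κ be an uncountable cardinal, let V be a normal ultrafilter on κ, let A ∈ V, and for each α ∈ A let U_α be a normal ultrafilter on α. Define W by: for X ⊆ κ, X ∈ W if and only if {α ∈ A : X ∩ α ∈ U_α} ∈ V. Then W is a normal ultrafilter on κ. -/

import Mathlib

open Set

namespace Separability

/-- `F` is an ultrafilter on the set `D` (members of `F` are subsets of `D`). -/
structure IsUltrafilterOnSet {σ : Type*} (D : Set σ) (F : Set (Set σ)) : Prop where
  sets_subset : ∀ X ∈ F, X ⊆ D
  univ_mem : D ∈ F
  empty_not_mem : ∅ ∉ F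
  superset_mem : ∀ X ∈ F, ∀ Y, Y ⊆ D → X ⊆ Y → Y ∈ F
  inter_mem : ∀ X ∈ F, ∀ Y ∈ F, X ∩ Y ∈ F
  mem_or_compl_mem : ∀ X, X ⊆ D → (X ∈ F ∨ D \ X ∈ F)

/-- An ultrafilter on (the type of ordinals below) `κ`. -/
def IsUltrafilterOn (κ : Ordinal) (F : Set (Set Ordinal)) : Prop :=
  IsUltrafilterOnSet (Set.Iio κ) F

/-- `F` is a *normal* ultrafilter on `κ`: it is an ultrafilter on `κ`, it contains every
co-bounded subset of `κ`, and every function that is regressive on some member of `F`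
is constant on some member of `F`. -/
def IsNormalUltrafilterOn (κ : Ordinal) (F : Set (Set Ordinal)) : Prop :=
  IsUltrafilterOn κ F ∧
  (∀ α < κ, {β | α ≤ β ∧ β < κ} ∈ F) ∧
  (∀ f : Ordinal → Ordinal, ∀ S ∈ F, (∀ β ∈ S, 0 < β → f β < β) →
    ∃ T ∈ F, ∃ γ, ∀ β ∈ T, f β = γ)

/-- The ordinal `κ` is a cardinal. -/
def IsCard (κ : Ordinal) : Prop := κ.card.ord = κ

/-- `F` (an ultrafilter on the set `D`) is `κ`-complete: it is closed under intersections
of families of fewer than `κ` sets. -/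
def IsComplete {σ : Type*} (κ : Ordinal) (D : Set σ) (F : Set (Set σ)) : Prop :=
  ∀ δ < κ, ∀ g : Set.Iio δ → Set σ, (∀ i, g i ∈ F) → (D ∩ ⋂ i, g i) ∈ F

/-- `F` is nonprincipal: it contains no singleton. -/
def IsNonprincipal {σ : Type*} (F : Set (Set σ)) : Prop := ∀ b : σ, {b} ∉ F

/-- `α` is a measurable cardinal: an uncountable cardinal carrying a nonprincipal
`α`-complete ultrafilter on `α`. -/
def IsMeasurable (α : Ordinal) : Prop :=
  IsCard α ∧ Ordinal.omega0 < α ∧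
    ∃ F, IsUltrafilterOn α F ∧ IsNonprincipal F ∧ IsComplete α (Set.Iio α) F

/-- `P_κ(λ)`: the subsets of `λ` of cardinality less than `κ`. -/
def sP (κ lam : Ordinal.{0}) : Set (Set Ordinal.{0}) :=
  {x | x ⊆ Set.Iio lam ∧ Cardinal.mk x < Cardinal.lift.{1} κ.card}

/-- `F`, an ultrafilter on `P_κ(λ)`, is *fine*:
for every `i < λ` the set `{x ∈ P_κ(λ) : i ∈ x}` belongs to `F`. -/
def IsFine (κ lam : Ordinal) (F : Set (Set (Set Ordinal))) : Prop :=
  ∀ i < lam, {x | x ∈ sP κ lam ∧ i ∈ x} ∈ F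

/-- `κ` is a compact (strongly compact) cardinal: an uncountable cardinal such that for every
cardinal `λ ≥ κ` there is a `κ`-complete fine ultrafilter on `P_κ(λ)`. -/
def IsCompact (κ : Ordinal) : Prop :=
  IsCard κ ∧ Ordinal.omega0 < κ ∧
    ∀ lam, IsCard lam → κ ≤ lam →
      ∃ F, IsUltrafilterOnSet (sP κ lam) F ∧ IsComplete κ (sP κ lam) F ∧ IsFine κ lam F

/-- `F`, an ultrafilter on `P_κ(λ)`, is *normal*: every choice function on a member of `F`
(`f x ∈ x` for all `x` in some member of `F`) is constant on some member of `F`. -/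
def IsNormalFineMeasure (F : Set (Set (Set Ordinal))) : Prop :=
  ∀ f : Set Ordinal → Ordinal, ∀ S ∈ F, (∀ x ∈ S, f x ∈ x) →
    ∃ T ∈ F, ∃ γ, ∀ x ∈ T, f x = γ

/-- `κ` is a supercompact cardinal: for every cardinal `λ ≥ κ` there is a `κ`-complete
fine normal ultrafilter on `P_κ(λ)`. -/
def IsSupercompact (κ : Ordinal) : Prop :=
  IsCard κ ∧
    ∀ lam, IsCard lam → κ ≤ lam →
      ∃ F, IsUltrafilterOnSet (sP κ lam) F ∧ IsComplete κ (sP κ lam) F ∧ IsFine κ lam F ∧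
        IsNormalFineMeasure F

/-- The set of measurable cardinals below `κ`. -/
def measSet (κ : Ordinal) : Set Ordinal := {α | α < κ ∧ IsMeasurable α}

/-- `S_X = {α < κ : α is measurable and X ∩ α ∈ U_α}`. -/
def sX (κ : Ordinal) (U : Ordinal → Set (Set Ordinal)) (X : Set Ordinal) : Set Ordinal :=
  {α | α < κ ∧ IsMeasurable α ∧ X ∩ Set.Iio α ∈ U α}

/-- The sum of `⟨U_α : α measurable below κ⟩` over `V`: `Y` belongs to the sum iff
`S_Y ∈ V`. -/
def sumUF (κ : Ordinal) (U : Ordinal → Set (Set Ordinal)) (V : Set (Set Ordinal)) :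
    Set (Set Ordinal) :=
  {Y | Y ⊆ Set.Iio κ ∧ sX κ U Y ∈ V}

/-!
Membership in the sum is decided coordinatewise: `X` is large iff `X ∩ α` is `U α`-large for
`V`-almost every `α`, so the ultrafilter laws transfer from the `U α` and `V`. A tail `[γ, κ)` is
`U α`-large for every `α > γ`, and these `α` form a tail of `κ` because `κ` is a limit ordinal.
For normality, a function `f` regressive on a large set is constant, with some value `g α < α`,
on a `U α`-large set for `V`-almost every `α ≥ 2`; then `g` is regressive, hence constant `c` on a
`V`-large set by normality of `V`, and `f` takes the value `c` on a large set.
-/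

namespace IsUltrafilterOnSet

variable {σ : Type*} {D : Set σ} {F : Set (Set σ)}

theorem nonempty_of_mem (hF : IsUltrafilterOnSet D F) {X : Set σ} (hX : X ∈ F) : X.Nonempty :=
  Set.nonempty_iff_ne_empty.2 fun h => hF.empty_not_mem (h ▸ hX)

end IsUltrafilterOnSet

theorem IsNormalUltrafilterOn.exists_lt_fiber_mem {α : Ordinal} {F : Set (Set Ordinal)}
    (hF : IsNormalUltrafilterOn α F) (hα : 1 < α) {f : Ordinal → Ordinal} {S : Set Ordinal}
    (hS : S ∈ F) (hf : ∀ β ∈ S, 0 < β → f β < β) :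
    ∃ γ < α, {β | β ∈ S ∧ f β = γ} ∈ F := by
  obtain ⟨hFu, hFcb, hFn⟩ := hF
  obtain ⟨T, hT, γ, hTγ⟩ := hFn f S hS hf
  have hTS : T ∩ S ∈ F := hFu.inter_mem T hT S hS
  -- Some `β ≥ 1` lies in `T ∩ S`, so the constant value `γ = f β` is below `β < α`.
  obtain ⟨β, ⟨hβT, hβS⟩, hβ1, hβα⟩ :=
    hFu.nonempty_of_mem (hFu.inter_mem _ hTS _ (hFcb 1 hα))
  refine ⟨γ, hTγ β hβT ▸ (hf β hβS (zero_lt_one.trans_le hβ1)).trans hβα,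
    hFu.superset_mem _ hTS _ ?_ ?_⟩
  · exact fun β hβ => hFu.sets_subset S hS hβ.1
  · exact fun β hβ => ⟨hβ.2, hTγ β hβ.1⟩

def sumIndex (A : Set Ordinal) (U : Ordinal → Set (Set Ordinal)) (X : Set Ordinal) :
    Set Ordinal :=
  {α | α ∈ A ∧ X ∩ Set.Iio α ∈ U α}

def ultrafilterSum (κ : Ordinal) (V : Set (Set Ordinal)) (A : Set Ordinal)
    (U : Ordinal → Set (Set Ordinal)) : Set (Set Ordinal) :=
  {X | X ⊆ Set.Iio κ ∧ sumIndex A U X ∈ V}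

section Sum

variable {κ : Ordinal} {V : Set (Set Ordinal)} {A : Set Ordinal}
  {U : Ordinal → Set (Set Ordinal)} {X Y : Set Ordinal}

theorem sumIndex_subset : sumIndex A U X ⊆ A := fun _ hα => hα.1

theorem sumIndex_mono (hU : ∀ α ∈ A, IsUltrafilterOn α (U α)) (hXY : X ⊆ Y) :
    sumIndex A U X ⊆ sumIndex A U Y := fun α ⟨hαA, hX⟩ =>
  ⟨hαA, (hU α hαA).superset_mem _ hX _ inter_subset_right (inter_subset_inter_left _ hXY)⟩

theorem sumIndex_inter_subset (hU : ∀ α ∈ A, IsUltrafilterOn α (U α)) :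
    sumIndex A U X ∩ sumIndex A U Y ⊆ sumIndex A U (X ∩ Y) := by
  rintro α ⟨⟨hαA, hX⟩, -, hY⟩
  refine ⟨hαA, ?_⟩
  rw [inter_inter_distrib_right]
  exact (hU α hαA).inter_mem _ hX _ hY

theorem diff_sumIndex_subset (hU : ∀ α ∈ A, IsUltrafilterOn α (U α)) (hA : A ⊆ Set.Iio κ) :
    A \ sumIndex A U X ⊆ sumIndex A U (Set.Iio κ \ X) := by
  rintro α ⟨hαA, hαX⟩
  refine ⟨hαA, ?_⟩
  have hα : Set.Iio α ⊆ Set.Iio κ := Set.Iio_subset_Iio (hA hαA).le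
  have hcompl : Set.Iio α \ (X ∩ Set.Iio α) = (Set.Iio κ \ X) ∩ Set.Iio α := by
    ext β
    constructor
    · rintro ⟨hβα, hβX⟩
      exact ⟨⟨hα hβα, fun h => hβX ⟨h, hβα⟩⟩, hβα⟩
    · rintro ⟨⟨-, hβX⟩, hβα⟩
      exact ⟨hβα, fun h => hβX h.1⟩
  rw [← hcompl]
  exact ((hU α hαA).mem_or_compl_mem _ inter_subset_right).resolve_left fun h => hαX ⟨hαA, h⟩

theorem isUltrafilterOn_ultrafilterSum (hV : IsUltrafilterOn κ V) (hA : A ∈ V)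
    (hU : ∀ α ∈ A, IsUltrafilterOn α (U α)) : IsUltrafilterOn κ (ultrafilterSum κ V A U) := by
  have hAκ : A ⊆ Set.Iio κ := hV.sets_subset A hA
  have hlarge : ∀ {Y}, sumIndex A U Y ∈ V → ∀ Z, Y ⊆ Z → sumIndex A U Z ∈ V :=
    fun hY Z hYZ => hV.superset_mem _ hY _ (sumIndex_subset.trans hAκ) (sumIndex_mono hU hYZ)
  refine ⟨fun X hX => hX.1, ⟨subset_rfl, ?_⟩, ?_, ?_, ?_, ?_⟩
  · refine hV.superset_mem A hA _ (sumIndex_subset.trans hAκ) fun α hα => ⟨hα, ?_⟩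
    rw [inter_eq_self_of_subset_right (Set.Iio_subset_Iio (hAκ hα).le)]
    exact (hU α hα).univ_mem
  · rintro ⟨-, h⟩
    obtain ⟨α, hαA, hα⟩ := hV.nonempty_of_mem h
    exact (hU α hαA).empty_not_mem (by simpa using hα)
  · rintro X ⟨-, hX⟩ Y hY hXY
    exact ⟨hY, hlarge hX Y hXY⟩
  · rintro X ⟨hXκ, hX⟩ Y ⟨-, hY⟩
    exact ⟨inter_subset_left.trans hXκ, hV.superset_mem _ (hV.inter_mem _ hX _ hY) _
      (sumIndex_subset.trans hAκ) (sumIndex_inter_subset hU)⟩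
  · intro X hX
    refine (hV.mem_or_compl_mem _ (sumIndex_subset.trans hAκ)).imp (fun h => ⟨hX, h⟩) ?_
    intro h
    refine ⟨sdiff_subset, hV.superset_mem _ (hV.inter_mem A hA _ h) _
      (sumIndex_subset.trans hAκ) ?_⟩
    rintro α ⟨hαA, -, hαX⟩
    exact diff_sumIndex_subset hU hAκ ⟨hαA, hαX⟩

theorem Ico_mem_ultrafilterSum (hκ : Order.IsSuccLimit κ) (hV : IsUltrafilterOn κ V)
    (hVcb : ∀ γ < κ, Set.Ico γ κ ∈ V) (hA : A ∈ V) (hU : ∀ α ∈ A, IsUltrafilterOn α (U α))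
    (hUcb : ∀ α ∈ A, ∀ γ < α, Set.Ico γ α ∈ U α) {γ : Ordinal} (hγ : γ < κ) :
    Set.Ico γ κ ∈ ultrafilterSum κ V A U := by
  have hAκ : A ⊆ Set.Iio κ := hV.sets_subset A hA
  refine ⟨fun β hβ => hβ.2, hV.superset_mem _ (hV.inter_mem A hA _ (hVcb _ (hκ.succ_lt hγ))) _
    (sumIndex_subset.trans hAκ) ?_⟩
  rintro α ⟨hαA, hγα, -⟩
  refine ⟨hαA, (hU α hαA).superset_mem _ (hUcb α hαA γ (Order.succ_le_iff.1 hγα)) _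
    inter_subset_right fun β hβ => ⟨⟨hβ.1, hβ.2.trans (hAκ hαA)⟩, hβ.2⟩⟩

theorem ultrafilterSum_normal (hκ : 2 < κ) (hV : IsNormalUltrafilterOn κ V) (hA : A ∈ V)
    (hU : ∀ α ∈ A, IsNormalUltrafilterOn α (U α)) (f : Ordinal → Ordinal) {S : Set Ordinal}
    (hS : S ∈ ultrafilterSum κ V A U) (hf : ∀ β ∈ S, 0 < β → f β < β) :
    ∃ T ∈ ultrafilterSum κ V A U, ∃ γ, ∀ β ∈ T, f β = γ := by
  obtain ⟨hVu, hVcb, hVn⟩ := hV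
  have hAκ : A ⊆ Set.Iio κ := hVu.sets_subset A hA
  set M := sumIndex A U S ∩ Set.Ico 2 κ
  have hM : M ∈ V := hVu.inter_mem _ hS.2 _ (hVcb 2 hκ)
  have hfiber : ∀ α ∈ M, ∃ γ < α, α ∈ sumIndex A U {β | β ∈ S ∧ f β = γ} := by
    rintro α ⟨⟨hαA, hSα⟩, h2α, -⟩
    obtain ⟨γ, hγα, hγ⟩ := (hU α hαA).exists_lt_fiber_mem (one_lt_two.trans_le h2α) hSα
      fun β hβ => hf β hβ.1
    exact ⟨γ, hγα, hαA, (hU α hαA).1.superset_mem _ hγ _ inter_subset_right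
      fun β hβ => ⟨⟨hβ.1.1, hβ.2⟩, hβ.1.2⟩⟩
  choose! g hgα hg using hfiber
  obtain ⟨T, hT, c, hTc⟩ := hVn g M hM fun α hα _ => hgα α hα
  refine ⟨{β | β ∈ S ∧ f β = c}, ⟨fun β hβ => hS.1 hβ.1, ?_⟩, c, fun β hβ => hβ.2⟩
  refine hVu.superset_mem _ (hVu.inter_mem _ hT _ hM) _ (sumIndex_subset.trans hAκ) ?_
  rintro α ⟨hαT, hαM⟩
  simpa only [hTc α hαT] using hg α hαM

end Sum

/-- The sum of normal ultrafilters `⟨U_α : α ∈ A⟩` over a normal ultrafilter `V` on `κ`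
(with `A ∈ V`) is a normal ultrafilter on `κ`. -/
theorem sum_is_normal_ultrafilter (κ : Ordinal) (hcard : IsCard κ)
    (hunc : Ordinal.omega0 < κ)
    (V : Set (Set Ordinal)) (hV : IsNormalUltrafilterOn κ V)
    (A : Set Ordinal) (hA : A ∈ V)
    (U : Ordinal → Set (Set Ordinal)) (hU : ∀ α ∈ A, IsNormalUltrafilterOn α (U α)) :
    IsNormalUltrafilterOn κ
      {X | X ⊆ Set.Iio κ ∧ {α | α ∈ A ∧ X ∩ Set.Iio α ∈ U α} ∈ V} := by
  have hlim : Order.IsSuccLimit κ :=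
    hcard ▸ Cardinal.isSuccLimit_ord (Ordinal.aleph0_le_card.2 hunc.le)
  have htwo : (2 : Ordinal) < κ := (Ordinal.natCast_lt_omega0 2).trans hunc
  exact ⟨isUltrafilterOn_ultrafilterSum hV.1 hA fun α hα => (hU α hα).1,
    fun γ => Ico_mem_ultrafilterSum hlim hV.1 hV.2.1 hA (fun α hα => (hU α hα).1)
      fun α hα => (hU α hα).2.1,
    fun f _ hS hf => ultrafilterSum_normal htwo hV hA hU f hS hf⟩

end Separability
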